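/- arXiv:2410.10369 — 4 statements merged into one kernel-verified Lean document; each statement's English description precedes it below -/
import Mathlib

section
/- Let X be a standard normal random variable (law N(0,1)) and let a ∈ ℝ. Then E[ X · min{1, exp(aX)} ] = a · exp(a²/2) · Φ(−|a|), where Φ denotes the cumulative distribution function of the standard normal distribution. -/
open MeasureTheory ProbabilityTheory

/-- The cumulative distribution function of the standard normal distribution:
`Φ(z) = (2π)^{-1/2} ∫_{-∞}^{z} e^{-u²/2} du`. -/
noncomputable def stdNormalCDF (z : ℝ) : ℝ :=
  (Real.sqrt (2 * Real.pi))⁻¹ * ∫ u in Set.Iic z, Real.exp (-u ^ 2 / 2)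

open Filter Real Set

lemma integrable_id_mul_exp : Integrable (fun x : ℝ => x * Real.exp (-x ^ 2 / 2)) := by
  have h := integrable_mul_exp_neg_mul_sq (b := 1/2) (by norm_num)
  convert h using 2 with x
  ring_nf

lemma integrable_exp_half : Integrable (fun x : ℝ => Real.exp (-x ^ 2 / 2)) := by
  have h := integrable_exp_neg_mul_sq (b := 1/2) (by norm_num)
  convert h using 2 with x
  ring_nf

lemma hasDerivAt_negexp (x : ℝ) :
    HasDerivAt (fun x : ℝ => -Real.exp (-x ^ 2 / 2)) (x * Real.exp (-x ^ 2 / 2)) x := by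
  have h1 : HasDerivAt (fun x : ℝ => -x ^ 2 / 2) (-x) x := by
    have := ((hasDerivAt_pow 2 x).neg.div_const 2)
    refine this.congr_deriv ?_
    ring
  have := (h1.exp).neg
  refine this.congr_deriv ?_
  ring

lemma tendsto_negexp_zero_atTop :
    Tendsto (fun x : ℝ => -Real.exp (-x ^ 2 / 2)) atTop (nhds 0) := by
  rw [show (0:ℝ) = -0 by simp]
  apply Tendsto.neg
  apply Real.tendsto_exp_atBot.comp
  have h : Tendsto (fun x : ℝ => x ^ 2 / 2) atTop atTop :=
    (tendsto_pow_atTop (two_ne_zero)).atTop_div_const (by norm_num)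
  exact (tendsto_neg_atBot_iff.mpr h).congr (fun x => by ring)

lemma tendsto_negexp_zero_atBot :
    Tendsto (fun x : ℝ => -Real.exp (-x ^ 2 / 2)) atBot (nhds 0) := by
  have := tendsto_negexp_zero_atTop.comp tendsto_neg_atBot_atTop
  simpa [Function.comp_def] using this

lemma integral_Ioi_id_mul_exp (c : ℝ) :
    ∫ x in Set.Ioi c, x * Real.exp (-x ^ 2 / 2) = Real.exp (-c ^ 2 / 2) := by
  have := integral_Ioi_of_hasDerivAt_of_tendsto' (a := c)
    (fun x _ => hasDerivAt_negexp x) (integrable_id_mul_exp.integrableOn)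
    tendsto_negexp_zero_atTop
  simpa using this

lemma integral_Iic_id_mul_exp (c : ℝ) :
    ∫ x in Set.Iic c, x * Real.exp (-x ^ 2 / 2) = -Real.exp (-c ^ 2 / 2) := by
  have := integral_Iic_of_hasDerivAt_of_tendsto' (a := c)
    (fun x _ => hasDerivAt_negexp x) (integrable_id_mul_exp.integrableOn)
    tendsto_negexp_zero_atBot
  simpa using this

lemma integral_Iic_shift (g : ℝ → ℝ) (c a : ℝ) :
    ∫ x in Set.Iic c, g (x - a) = ∫ u in Set.Iic (c - a), g u := by
  rw [← integral_indicator measurableSet_Iic, ← integral_indicator measurableSet_Iic]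
  have h : ∀ x, (Set.Iic c).indicator (fun x => g (x - a)) x
      = (Set.Iic (c - a)).indicator g (x - a) := by
    intro x
    simp only [Set.indicator_apply, Set.mem_Iic, sub_le_sub_iff_right]
  simp_rw [h]
  exact integral_sub_right_eq_self ((Set.Iic (c - a)).indicator g) a

lemma integral_gaussian_eq (f : ℝ → ℝ) :
    ∫ x, f x ∂(gaussianReal 0 1) = ∫ x, gaussianPDFReal 0 1 x * f x := by
  rw [gaussianReal_of_var_ne_zero _ one_ne_zero]
  have hd : gaussianPDF 0 1 = fun x => ((gaussianPDFReal 0 1 x).toNNReal : ENNReal) := rfl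
  rw [hd, integral_withDensity_eq_integral_smul
    (measurable_gaussianPDFReal 0 1).real_toNNReal f]
  congr 1
  ext x
  simp [NNReal.smul_def, Real.coe_toNNReal _ (gaussianPDFReal_nonneg 0 1 x)]

lemma gaussianPDFReal_zero_one (x : ℝ) :
    gaussianPDFReal 0 1 x = (Real.sqrt (2 * Real.pi))⁻¹ * Real.exp (-x ^ 2 / 2) := by
  simp [gaussianPDFReal]

lemma exp_shift_eq (a x : ℝ) :
    Real.exp (a * x) * Real.exp (-x ^ 2 / 2)
      = Real.exp (a ^ 2 / 2) * Real.exp (-(x - a) ^ 2 / 2) := by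
  rw [← Real.exp_add, ← Real.exp_add]
  congr 1
  ring

lemma main_nonneg (a : ℝ) (ha : 0 ≤ a) :
    ∫ x, x * min 1 (Real.exp (a * x)) ∂(gaussianReal 0 1)
      = a * Real.exp (a ^ 2 / 2) * stdNormalCDF (-a) := by
  rw [integral_gaussian_eq]
  simp_rw [gaussianPDFReal_zero_one, mul_assoc]
  rw [integral_const_mul]
  -- the full integrand
  set F : ℝ → ℝ := fun x => Real.exp (-x ^ 2 / 2) * (x * min 1 (Real.exp (a * x))) with hF
  have hFcont : Continuous F := by
    apply Continuous.mul (by continuity)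
    exact continuous_id.mul (continuous_const.min (Real.continuous_exp.comp (by continuity)))
  have hFint : Integrable F := by
    refine integrable_id_mul_exp.mono hFcont.aestronglyMeasurable ?_
    filter_upwards with x
    rw [hF]
    simp only [norm_mul, Real.norm_eq_abs, Real.abs_exp, abs_mul]
    have hm : |min 1 (Real.exp (a * x))| ≤ 1 := by
      rw [abs_of_nonneg (le_min zero_le_one (Real.exp_nonneg _))]
      exact min_le_left _ _
    calc Real.exp (-x ^ 2 / 2) * (|x| * |min 1 (Real.exp (a * x))|)
        ≤ Real.exp (-x ^ 2 / 2) * (|x| * 1) :=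
          mul_le_mul_of_nonneg_left
            (mul_le_mul_of_nonneg_left hm (abs_nonneg x)) (Real.exp_pos _).le
      _ = |x| * Real.exp (-x ^ 2 / 2) := by ring
  have hsplit : ∫ x, F x = (∫ x in Set.Iic 0, F x) + ∫ x in Set.Ioi 0, F x := by
    rw [← integral_add_compl measurableSet_Iic hFint, Set.compl_Iic]
  -- the Ioi part
  have hIoi : ∫ x in Set.Ioi (0:ℝ), F x = 1 := by
    rw [setIntegral_congr_fun measurableSet_Ioi (g := fun x => x * Real.exp (-x ^ 2 / 2))]
    · simpa using integral_Ioi_id_mul_exp 0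
    · intro x hx
      have h1 : (1:ℝ) ≤ Real.exp (a * x) := by
        rw [Real.one_le_exp_iff]
        exact mul_nonneg ha (le_of_lt hx)
      rw [hF]
      simp only [min_eq_left h1]
      ring
  -- the Iic part
  have hIic : ∫ x in Set.Iic (0:ℝ), F x
      = -1 + a * Real.exp (a ^ 2 / 2) * ∫ u in Set.Iic (-a), Real.exp (-u ^ 2 / 2) := by
    have hcong : ∀ x ∈ Set.Iic (0:ℝ), F x
        = Real.exp (a ^ 2 / 2) * ((x - a) * Real.exp (-(x - a) ^ 2 / 2))
          + Real.exp (a ^ 2 / 2) * a * Real.exp (-(x - a) ^ 2 / 2) := by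
      intro x hx
      have h1 : Real.exp (a * x) ≤ 1 := by
        rw [Real.exp_le_one_iff]
        exact mul_nonpos_of_nonneg_of_nonpos ha hx
      rw [hF]
      simp only [min_eq_right h1]
      have := exp_shift_eq a x
      calc Real.exp (-x ^ 2 / 2) * (x * Real.exp (a * x))
          = x * (Real.exp (a * x) * Real.exp (-x ^ 2 / 2)) := by ring
        _ = x * (Real.exp (a ^ 2 / 2) * Real.exp (-(x - a) ^ 2 / 2)) := by rw [this]
        _ = _ := by ring
    rw [setIntegral_congr_fun measurableSet_Iic hcong]
    have hi1 : IntegrableOn (fun x : ℝ =>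
        Real.exp (a ^ 2 / 2) * ((x - a) * Real.exp (-(x - a) ^ 2 / 2))) (Set.Iic 0) :=
      (((integrable_id_mul_exp.comp_sub_right a)).const_mul _).integrableOn
    have hi2 : IntegrableOn (fun x : ℝ =>
        Real.exp (a ^ 2 / 2) * a * Real.exp (-(x - a) ^ 2 / 2)) (Set.Iic 0) :=
      (((integrable_exp_half.comp_sub_right a)).const_mul _).integrableOn
    rw [integral_add hi1 hi2, integral_const_mul, integral_const_mul]
    have e1 : ∫ x in Set.Iic (0:ℝ), (x - a) * Real.exp (-(x - a) ^ 2 / 2)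
        = -Real.exp (-(-a) ^ 2 / 2) := by
      have := integral_Iic_shift (fun u => u * Real.exp (-u ^ 2 / 2)) 0 a
      rw [this, zero_sub, integral_Iic_id_mul_exp]
    have e2 : ∫ x in Set.Iic (0:ℝ), Real.exp (-(x - a) ^ 2 / 2)
        = ∫ u in Set.Iic (-a), Real.exp (-u ^ 2 / 2) := by
      have := integral_Iic_shift (fun u => Real.exp (-u ^ 2 / 2)) 0 a
      rw [this, zero_sub]
    rw [e1, e2]
    have e3 : Real.exp (a ^ 2 / 2) * -Real.exp (-(-a) ^ 2 / 2) = -1 := by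
      rw [show ((-a:ℝ)) ^ 2 = a ^ 2 by ring, mul_neg, ← Real.exp_add,
        show a ^ 2 / 2 + -a ^ 2 / 2 = (0:ℝ) by ring, Real.exp_zero]
    rw [e3]
    ring
  rw [hsplit, hIic, hIoi]
  simp only [stdNormalCDF]
  ring

/-- For `X ~ N(0,1)` and `a ∈ ℝ`,
`𝔼[X · min{1, exp(aX)}] = a · exp(a²/2) · Φ(−|a|)`. -/
theorem gaussian_min_exp_identity (a : ℝ) :
    ∫ x, x * min 1 (Real.exp (a * x)) ∂(gaussianReal 0 1)
      = a * Real.exp (a ^ 2 / 2) * stdNormalCDF (-|a|) := by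
  rcases le_or_gt 0 a with ha | ha
  · rw [abs_of_nonneg ha]
    exact main_nonneg a ha
  · have hmap : Measure.map (fun x : ℝ => -x) (gaussianReal 0 1) = gaussianReal 0 1 := by
      have h := gaussianReal_map_const_mul (μ := 0) (v := 1) (-1)
      have hv : (NNReal.mk ((-1:ℝ)^2) (sq_nonneg _) : NNReal) * 1 = 1 := by
        ext; norm_num
      rw [hv, mul_zero] at h
      rw [← h]
      congr 1
      ext x
      ring
    have hf : Continuous (fun x : ℝ => x * min 1 (Real.exp (a * x))) :=
      continuous_id.mul (continuous_const.min (Real.continuous_exp.comp (by continuity)))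
    calc ∫ x, x * min 1 (Real.exp (a * x)) ∂(gaussianReal 0 1)
        = ∫ x, x * min 1 (Real.exp (a * x))
            ∂(Measure.map (fun x : ℝ => -x) (gaussianReal 0 1)) := by rw [hmap]
      _ = ∫ x, (-x) * min 1 (Real.exp (a * (-x))) ∂(gaussianReal 0 1) := by
          rw [integral_map measurable_neg.aemeasurable hf.aestronglyMeasurable]
      _ = ∫ x, -(x * min 1 (Real.exp ((-a) * x))) ∂(gaussianReal 0 1) := by
          congr 1
          ext x
          rw [show a * (-x) = (-a) * x by ring]
          ring
      _ = -(∫ x, x * min 1 (Real.exp ((-a) * x)) ∂(gaussianReal 0 1)) := integral_neg _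
      _ = -((-a) * Real.exp ((-a) ^ 2 / 2) * stdNormalCDF (-(-a))) := by
          rw [main_nonneg (-a) (by linarith)]
      _ = a * Real.exp (a ^ 2 / 2) * stdNormalCDF (-|a|) := by
          rw [abs_of_neg ha, neg_neg]
          rw [show ((-a:ℝ)) ^ 2 = a ^ 2 by ring]
          ring
end

section
/- Let X be a standard normal random variable (law N(0,1)), let T > 0, let x ∈ ℝ, and let E : ℝ → ℝ be twice continuously differentiable with bounded second derivative. Then lim_{h → 0⁺} (1/h) · E[ X · min{1, exp( −(E(x + hX) − E(x))/T )} ] = −E'(x)/(2T). -/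
open MeasureTheory ProbabilityTheory Filter Topology
open Real
open scoped NNReal ENNReal

namespace SADrift




local notation "γ" => gaussianReal 0 1

lemma pdf01 (y : ℝ) : gaussianPDFReal 0 1 y = (Real.sqrt (2 * π))⁻¹ * Real.exp (-(2⁻¹) * y ^ 2) := by
  rw [gaussianPDFReal]
  push_cast
  rw [sub_zero, mul_one]
  congr 1
  ring_nf

lemma integral_gaussian01 (f : ℝ → ℝ) :
    ∫ y, f y ∂γ = ∫ y, gaussianPDFReal 0 1 y * f y := by
  rw [gaussianReal_of_var_ne_zero _ one_ne_zero]
  have h : (gaussianPDF 0 1) = fun y => ((Real.toNNReal (gaussianPDFReal 0 1 y) : ℝ≥0) : ℝ≥0∞) :=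
    rfl
  rw [h, integral_withDensity_eq_integral_smul
    ((measurable_gaussianPDFReal 0 1).real_toNNReal) f]
  congr 1
  ext y
  rw [NNReal.smul_def, smul_eq_mul, Real.coe_toNNReal _ (gaussianPDFReal_nonneg _ _ _)]

lemma integrable_gaussian01_iff (f : ℝ → ℝ) :
    Integrable f γ ↔ Integrable (fun y => f y * gaussianPDFReal 0 1 y) := by
  rw [gaussianReal_of_var_ne_zero _ one_ne_zero,
    integrable_withDensity_iff (measurable_gaussianPDF 0 1)
      (ae_of_all _ fun y => ENNReal.ofReal_lt_top)]
  refine integrable_congr (ae_of_all _ fun y => ?_)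
  show f y * (ENNReal.ofReal (gaussianPDFReal 0 1 y)).toReal = f y * gaussianPDFReal 0 1 y
  rw [ENNReal.toReal_ofReal (gaussianPDFReal_nonneg _ _ _)]

lemma int_abs_pow (n : ℕ) : Integrable (fun y => |y| ^ n) γ := by
  rw [integrable_gaussian01_iff]
  have h1 : Integrable (fun y : ℝ => y ^ (n : ℝ) * Real.exp (-(2⁻¹) * y ^ 2)) :=
    integrable_rpow_mul_exp_neg_mul_sq (by norm_num)
      (neg_one_lt_zero.trans_le (Nat.cast_nonneg n))
  have h2 : Integrable
      (fun y : ℝ => (Real.sqrt (2 * π))⁻¹ * (|y| ^ n * Real.exp (-(2⁻¹) * y ^ 2))) := by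
    refine (h1.abs.congr (ae_of_all _ fun y => ?_)).const_mul _
    show |y ^ (n : ℝ) * Real.exp (-(2⁻¹) * y ^ 2)| = |y| ^ n * Real.exp (-(2⁻¹) * y ^ 2)
    rw [abs_mul, abs_of_nonneg (Real.exp_pos _).le, Real.rpow_natCast, abs_pow]
  refine h2.congr (ae_of_all _ fun y => ?_)
  show (Real.sqrt (2 * π))⁻¹ * (|y| ^ n * Real.exp (-(2⁻¹) * y ^ 2))
      = |y| ^ n * gaussianPDFReal 0 1 y
  rw [pdf01]; ring


lemma map_neg_gaussian01 :
    Measure.map (fun y : ℝ => -y) (gaussianReal 0 1) = gaussianReal 0 1 := by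
  have h := gaussianReal_map_const_mul (μ := 0) (v := 1) (-1)
  have h1 : ((-1 : ℝ) * ·) = (fun y : ℝ => -y) := by funext y; ring
  rw [h1] at h
  rw [h]
  congr 1
  · norm_num
  · apply NNReal.eq; norm_num

lemma integral_odd (f : ℝ → ℝ) (hf : Continuous f) (hodd : ∀ y, f (-y) = -f y) :
    ∫ y, f y ∂(gaussianReal 0 1) = 0 := by
  have h1 : ∫ y, f y ∂(gaussianReal 0 1) = ∫ y, f (-y) ∂(gaussianReal 0 1) := by
    conv_lhs => rw [← map_neg_gaussian01]
    rw [integral_map measurable_neg.aemeasurable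
      (by rw [map_neg_gaussian01]; exact hf.aestronglyMeasurable)]
  have h2 : ∫ y, f (-y) ∂(gaussianReal 0 1) = -∫ y, f y ∂(gaussianReal 0 1) := by
    simp_rw [hodd]
    exact integral_neg f
  linarith [h1, h2]

lemma integrable_sq_exp : Integrable (fun y : ℝ => y ^ 2 * Real.exp (-(2⁻¹) * y ^ 2)) := by
  have h1 : Integrable (fun y : ℝ => y ^ ((2 : ℕ) : ℝ) * Real.exp (-(2⁻¹) * y ^ 2)) :=
    integrable_rpow_mul_exp_neg_mul_sq (by norm_num) (by norm_num)
  refine h1.congr (ae_of_all _ fun y => ?_)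
  show y ^ ((2 : ℕ) : ℝ) * Real.exp (-(2⁻¹) * y ^ 2) = y ^ 2 * Real.exp (-(2⁻¹) * y ^ 2)
  rw [Real.rpow_natCast]

lemma integral_sq_exp : ∫ y : ℝ, y ^ 2 * Real.exp (-(2⁻¹) * y ^ 2) = Real.sqrt (2 * π) := by
  set F : ℝ → ℝ := fun y => -(y * Real.exp (-(2⁻¹) * y ^ 2)) with hF
  have hderiv : ∀ y : ℝ, HasDerivAt F
      (y ^ 2 * Real.exp (-(2⁻¹) * y ^ 2) - Real.exp (-(2⁻¹) * y ^ 2)) y := by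
    intro y
    have h1 : HasDerivAt (fun y : ℝ => -(2⁻¹) * y ^ 2) (-(2⁻¹) * (2 * y)) y := by
      simpa using (hasDerivAt_pow 2 y).const_mul (-(2⁻¹) : ℝ)
    have h2 := ((hasDerivAt_id y).mul h1.exp).neg
    refine h2.congr_deriv ?_
    simp only [id_eq]
    ring
  have hint : Integrable (fun y : ℝ =>
      y ^ 2 * Real.exp (-(2⁻¹) * y ^ 2) - Real.exp (-(2⁻¹) * y ^ 2)) :=
    integrable_sq_exp.sub (integrable_exp_neg_mul_sq (by norm_num))
  have hFint : Integrable F := by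
    have := integrable_mul_exp_neg_mul_sq (b := 2⁻¹) (by norm_num)
    exact this.neg
  have h0 := integral_eq_zero_of_hasDerivAt_of_integrable hderiv hint hFint
  rw [integral_sub integrable_sq_exp (integrable_exp_neg_mul_sq (by norm_num))] at h0
  have hg : ∫ y : ℝ, Real.exp (-(2⁻¹) * y ^ 2) = Real.sqrt (2 * π) := by
    rw [integral_gaussian]
    congr 1
    rw [div_eq_iff (by norm_num : (2⁻¹ : ℝ) ≠ 0)]
    ring
  linarith [h0, hg]

lemma moment_two : ∫ y, y ^ 2 ∂(gaussianReal 0 1) = 1 := by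
  rw [integral_gaussian01]
  have h1 : ∀ y : ℝ, gaussianPDFReal 0 1 y * y ^ 2
      = (Real.sqrt (2 * π))⁻¹ * (y ^ 2 * Real.exp (-(2⁻¹) * y ^ 2)) := by
    intro y; rw [pdf01]; ring
  simp_rw [h1]
  rw [integral_const_mul, integral_sq_exp, inv_mul_cancel₀]
  positivity


lemma min1_eq (t : ℝ) : min 1 t = 1 + min 0 (t - 1) := by
  rcases le_total t 1 with h | h
  · rw [min_eq_right h, min_eq_right (by linarith)]; ring
  · rw [min_eq_left h, min_eq_left (by linarith)]; ring

lemma min0_mul {h : ℝ} (hh : 0 < h) (t : ℝ) : min 0 (h * t) = h * min 0 t := by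
  rcases le_total t 0 with ht | ht
  · rw [min_eq_right ht, min_eq_right (by nlinarith)]
  · rw [min_eq_left ht, min_eq_left (by nlinarith), mul_zero]

lemma abs_min0_sub (a b : ℝ) : |min 0 a - min 0 b| ≤ |a - b| := by
  rcases le_total a 0 with ha | ha <;> rcases le_total b 0 with hb | hb
  · rw [min_eq_right ha, min_eq_right hb]
  · rw [min_eq_right ha, min_eq_left hb]
    rw [abs_le]; constructor <;> [skip; skip] <;> cases abs_cases (a - b) <;> linarith
  · rw [min_eq_left ha, min_eq_right hb]
    rw [abs_le]; constructor <;> cases abs_cases (a - b) <;> linarith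
  · rw [min_eq_left ha, min_eq_left hb]; simp [abs_nonneg]

lemma exp_quad {z : ℝ} (hz : z ≤ 0) : |Real.exp z - 1 - z| ≤ z ^ 2 / 2 := by
  have hlow : 0 ≤ Real.exp z - 1 - z := by
    have := Real.add_one_le_exp z; linarith
  rw [abs_of_nonneg hlow]
  -- show exp z ≤ 1 + z + z^2/2 for z ≤ 0
  set φ : ℝ → ℝ := fun t => 1 + t + t ^ 2 / 2 - Real.exp t with hφ
  have hd : ∀ t : ℝ, HasDerivAt φ (1 + t - Real.exp t) t := by
    intro t
    have h1 : HasDerivAt (fun t : ℝ => 1 + t + t ^ 2 / 2) (1 + (2 : ℕ) * t ^ (2 - 1) / 2) t :=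
      ((hasDerivAt_id t).const_add 1).add ((hasDerivAt_pow 2 t).div_const 2)
    have h2 := h1.sub (Real.hasDerivAt_exp t)
    refine h2.congr_deriv ?_
    push_cast; ring
  have hanti : AntitoneOn φ (Set.Iic 0) := by
    refine antitoneOn_of_deriv_nonpos (convex_Iic 0) ?_ ?_ ?_
    · exact Continuous.continuousOn (by fun_prop)
    · intro t _
      exact (hd t).differentiableAt.differentiableWithinAt
    · intro t ht
      rw [(hd t).deriv]
      have := Real.add_one_le_exp t
      linarith
  have h0 : φ z ≥ φ 0 := by
    refine hanti (Set.mem_Iic.mpr hz) (Set.mem_Iic.mpr le_rfl) hz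
  simp only [hφ] at h0
  norm_num at h0
  linarith

lemma min0_exp (z : ℝ) : |min 0 (Real.exp z - 1) - min 0 z| ≤ z ^ 2 / 2 := by
  rcases le_total z 0 with hz | hz
  · have h1 : Real.exp z - 1 ≤ 0 := by
      have := Real.exp_le_one_iff.mpr hz; linarith
    rw [min_eq_right h1, min_eq_right hz]
    exact exp_quad hz
  · have h1 : 0 ≤ Real.exp z - 1 := by
      have := Real.one_le_exp hz; linarith
    rw [min_eq_left h1, min_eq_left hz]
    simp; positivity


variable {E : ℝ → ℝ} {M : ℝ}

lemma deriv_E_diff (hE : ContDiff ℝ 2 E) : Differentiable ℝ (deriv E) := by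
  have h : ContDiff ℝ ((1 : ℕ) + 1) E := by exact_mod_cast hE
  rw [contDiff_succ_iff_deriv] at h
  exact h.2.2.differentiable (by simp)

lemma iter2 (hE : ContDiff ℝ 2 E) : ∀ y, deriv (deriv E) y = iteratedDeriv 2 E y := by
  intro y
  rw [iteratedDeriv_succ, iteratedDeriv_one]

lemma lip_deriv (hE : ContDiff ℝ 2 E) (hM : ∀ z, |iteratedDeriv 2 E z| ≤ M) :
    ∀ y z : ℝ, |deriv E y - deriv E z| ≤ M * |y - z| := by
  intro y z
  have h := Convex.norm_image_sub_le_of_norm_deriv_le (s := Set.univ) (f := deriv E)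
    (fun w _ => (deriv_E_diff hE w)) (fun w _ => by
      rw [Real.norm_eq_abs, iter2 hE w]; exact hM w)
    convex_univ (Set.mem_univ z) (Set.mem_univ y)
  simpa [Real.norm_eq_abs] using h

lemma taylor_bound (hE : ContDiff ℝ 2 E) (hM : ∀ z, |iteratedDeriv 2 E z| ≤ M) (x : ℝ) :
    ∀ u : ℝ, |E (x + u) - E x - u * deriv E x| ≤ M * u ^ 2 := by
  intro u
  set g : ℝ → ℝ := fun y => E y - y * deriv E x with hg
  have hgd : ∀ y : ℝ, HasDerivAt g (deriv E y - deriv E x) y := by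
    intro y
    have h := ((hE.differentiable (by norm_num) y).hasDerivAt).sub
      ((hasDerivAt_id y).mul_const (deriv E x))
    simp at h
    exact h
  have hM0 : 0 ≤ M := le_trans (abs_nonneg _) (hM 0)
  have key := Convex.norm_image_sub_le_of_norm_deriv_le (s := Set.Icc (x - |u|) (x + |u|))
    (f := g) (C := M * |u|)
    (fun w _ => (hgd w).differentiableAt)
    (fun w hw => by
      rw [(hgd w).deriv, Real.norm_eq_abs]
      have h1 := lip_deriv hE hM w x
      have h2 : |w - x| ≤ |u| := by
        rw [abs_le]; constructor <;> [linarith [hw.1]; linarith [hw.2]]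
      calc |deriv E w - deriv E x| ≤ M * |w - x| := h1
        _ ≤ M * |u| := by nlinarith [abs_nonneg u]
      )
    (convex_Icc _ _)
    (show x ∈ Set.Icc (x - |u|) (x + |u|) from
      Set.mem_Icc.mpr ⟨by linarith [abs_nonneg u], by linarith [abs_nonneg u]⟩)
    (show x + u ∈ Set.Icc (x - |u|) (x + |u|) from
      Set.mem_Icc.mpr ⟨by linarith [neg_abs_le u], by linarith [le_abs_self u]⟩)
  have h3 : g (x + u) - g x = E (x + u) - E x - u * deriv E x := by
    simp only [hg]; ring
  rw [h3, Real.norm_eq_abs, Real.norm_eq_abs] at key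
  calc |E (x + u) - E x - u * deriv E x| ≤ M * |u| * |x + u - x| := key
    _ = M * u ^ 2 := by
        rw [show x + u - x = u by ring, mul_assoc, abs_mul_abs_self, ← sq]


lemma int_abs : Integrable (fun y => |y|) (gaussianReal 0 1) :=
  (int_abs_pow 1).congr (ae_of_all _ fun y => pow_one _)

lemma int_sq : Integrable (fun y : ℝ => y ^ 2) (gaussianReal 0 1) :=
  (int_abs_pow 2).congr (ae_of_all _ fun y => sq_abs y)

lemma int_mul_abs : Integrable (fun y : ℝ => y * |y|) (gaussianReal 0 1) := by
  refine (int_sq.mono' (Continuous.aestronglyMeasurable (by fun_prop))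
    (ae_of_all _ fun y => ?_))
  rw [Real.norm_eq_abs, abs_mul, abs_abs, ← sq_abs, sq]

lemma moment_one : ∫ y, y ∂(gaussianReal 0 1) = 0 :=
  integral_odd _ continuous_id fun y => rfl

lemma moment_mul_abs : ∫ y, y * |y| ∂(gaussianReal 0 1) = 0 :=
  integral_odd _ (by fun_prop) fun y => by rw [abs_neg]; ring

lemma integral_min0_linear (a : ℝ) :
    ∫ y, y * min 0 (-a * y) ∂(gaussianReal 0 1) = -a / 2 := by
  have hid : ∀ y : ℝ, y * min 0 (-a * y)
      = (-a / 2) * y ^ 2 + (-|a| / 2) * (y * |y|) := by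
    intro y
    have hmin : min 0 (-a * y) = ((-a * y) - |(-a) * y|) / 2 := by
      rcases le_total (-a * y) 0 with h | h
      · rw [min_eq_right h, abs_of_nonpos h]; ring
      · rw [min_eq_left h, abs_of_nonneg h]; ring
    rw [hmin, abs_mul, abs_neg]
    ring
  simp_rw [hid]
  rw [integral_add ((int_sq.const_mul _)) ((int_mul_abs.const_mul _)),
    integral_const_mul, integral_const_mul, moment_two, moment_mul_abs]
  ring


lemma alg {T h A M B zv2 : ℝ} (hT : 0 < T) (hh0 : 0 < h) (hh1 : h ≤ 1) (hA0 : 0 ≤ A)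
    (hM0 : 0 ≤ M) (hB0 : 0 ≤ B) (hzv2 : zv2 ≤ (h * (A * B + M * B ^ 2) / T) ^ 2) :
    (1 / h) * (B * (zv2 / 2 + M * (h ^ 2 * B ^ 2) / T))
      ≤ h * ((A ^ 2 / T ^ 2 + M / T) * B ^ 3 + M ^ 2 / T ^ 2 * B ^ 5) := by
  have hT' : T ≠ 0 := ne_of_gt hT
  have hh' : h ≠ 0 := ne_of_gt hh0
  have step1 : (1 / h) * (B * (zv2 / 2 + M * (h ^ 2 * B ^ 2) / T))
      ≤ (1 / h) * (B * ((h * (A * B + M * B ^ 2) / T) ^ 2 / 2 + M * (h ^ 2 * B ^ 2) / T)) := by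
    apply mul_le_mul_of_nonneg_left _ (by positivity)
    apply mul_le_mul_of_nonneg_left _ hB0
    apply add_le_add_left
    linarith
  refine le_trans step1 ?_
  rw [div_pow, mul_pow]
  have e1 : (1 / h) * (B * (h ^ 2 * (A * B + M * B ^ 2) ^ 2 / T ^ 2 / 2 + M * (h ^ 2 * B ^ 2) / T))
      = h * (B * ((A * B + M * B ^ 2) ^ 2 / T ^ 2 / 2 + M * B ^ 2 / T)) := by
    field_simp
  rw [e1]
  apply mul_le_mul_of_nonneg_left _ (le_of_lt hh0)
  have key : B * (A * B + M * B ^ 2) ^ 2 ≤ 2 * (A ^ 2 * B ^ 3 + M ^ 2 * B ^ 5) := by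
    nlinarith [mul_nonneg (pow_nonneg hB0 3) (sq_nonneg (A - M * B))]
  rw [show B * ((A * B + M * B ^ 2) ^ 2 / T ^ 2 / 2 + M * B ^ 2 / T)
      = (B * (A * B + M * B ^ 2) ^ 2) / (2 * T ^ 2) + M * B ^ 3 / T by field_simp,
    show (A ^ 2 / T ^ 2 + M / T) * B ^ 3 + M ^ 2 / T ^ 2 * B ^ 5
      = (2 * (A ^ 2 * B ^ 3 + M ^ 2 * B ^ 5)) / (2 * T ^ 2) + M * B ^ 3 / T by
        field_simp; ring]
  apply add_le_add_left
  gcongr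

end SADrift

open SADrift in
/-- Drift identification in the diffusion scaling limit of Simulated Annealing:
for `X ~ N(0,1)`, `T > 0` and `E : ℝ → ℝ` twice continuously differentiable with bounded
second derivative,
`(1/h) 𝔼[X · min{1, exp(−(E(x+hX) − E(x))/T)}] → −E'(x)/(2T)` as `h → 0⁺`. -/
theorem sa_drift_limit (T : ℝ) (hT : 0 < T) (x : ℝ)
    (E : ℝ → ℝ) (hE : ContDiff ℝ 2 E)
    (hE'' : ∃ M : ℝ, ∀ z : ℝ, |iteratedDeriv 2 E z| ≤ M) :
    Tendsto
      (fun h : ℝ =>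
        (1 / h) * ∫ X, X * min 1 (Real.exp (-(E (x + h * X) - E x) / T))
          ∂(gaussianReal 0 1))
      (𝓝[>] 0) (𝓝 (-deriv E x / (2 * T))) := by
  obtain ⟨M, hM⟩ := hE''
  have hM0 : 0 ≤ M := le_trans (abs_nonneg _) (hM 0)
  have hT' : T ≠ 0 := ne_of_gt hT
  set a : ℝ := deriv E x / T with ha
  set A : ℝ := |deriv E x| with hA
  have hA0 : 0 ≤ A := abs_nonneg _
  set L : ℝ := -deriv E x / (2 * T) with hLdef
  set Φ : ℝ → ℝ :=
    fun X => (A ^ 2 / T ^ 2 + M / T) * |X| ^ 3 + M ^ 2 / T ^ 2 * |X| ^ 5 with hΦdef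
  have intΦ : Integrable Φ (gaussianReal 0 1) :=
    ((int_abs_pow 3).const_mul _).add ((int_abs_pow 5).const_mul _)
  set C : ℝ := ∫ X, Φ X ∂(gaussianReal 0 1) with hC
  have hEc : Continuous E := hE.continuous
  have key : ∀ h ∈ Set.Ioc (0:ℝ) 1,
      |(1 / h) * (∫ X, X * min 1 (Real.exp (-(E (x + h * X) - E x) / T))
        ∂(gaussianReal 0 1)) - L| ≤ C * h := by
    rintro h ⟨hh0, hh1⟩
    have hh0' : h ≠ 0 := ne_of_gt hh0
    -- integrability of the three integrands
    have hg2b : ∀ X : ℝ, ‖X * min 0 (Real.exp (-(E (x + h * X) - E x) / T) - 1)‖ ≤ |X| := by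
      intro X
      rw [Real.norm_eq_abs, abs_mul]
      have h1 : |min 0 (Real.exp (-(E (x + h * X) - E x) / T) - 1)| ≤ 1 := by
        rw [abs_le]
        constructor
        · have h2 := Real.exp_pos (-(E (x + h * X) - E x) / T)
          have h3 : (-1 : ℝ) ≤ 0 := by norm_num
          exact le_min h3 (by linarith)
        · exact le_trans (min_le_left _ _) zero_le_one
      exact mul_le_of_le_one_right (abs_nonneg X) h1
    have intg2 : Integrable
        (fun X : ℝ => X * min 0 (Real.exp (-(E (x + h * X) - E x) / T) - 1))
        (gaussianReal 0 1) := by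
      refine int_abs.mono' (Continuous.aestronglyMeasurable ?_) (ae_of_all _ hg2b)
      fun_prop
    have intg3 : Integrable (fun X : ℝ => X * min 0 (-a * X)) (gaussianReal 0 1) := by
      refine (int_sq.const_mul |a|).mono'
        (Continuous.aestronglyMeasurable (by fun_prop)) (ae_of_all _ fun X => ?_)
      rw [Real.norm_eq_abs, abs_mul]
      have h1 : |min 0 (-a * X)| ≤ |a| * |X| := by
        rcases le_total (-a * X) 0 with hle | hle
        · rw [min_eq_right hle, abs_mul, abs_neg]
        · rw [min_eq_left hle, abs_zero]; positivity
      calc |X| * |min 0 (-a * X)| ≤ |X| * (|a| * |X|) :=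
            mul_le_mul_of_nonneg_left h1 (abs_nonneg X)
        _ = |a| * (|X| * |X|) := by ring
        _ = |a| * X ^ 2 := by rw [abs_mul_abs_self, ← sq]
    -- step 1 : the integral equals the integral of g2
    have hint1 : (∫ X, X * min 1 (Real.exp (-(E (x + h * X) - E x) / T))
          ∂(gaussianReal 0 1))
        = ∫ X, X * min 0 (Real.exp (-(E (x + h * X) - E x) / T) - 1)
          ∂(gaussianReal 0 1) := by
      have hfun : (fun X : ℝ => X * min 1 (Real.exp (-(E (x + h * X) - E x) / T)))
          = fun X => X + X * min 0 (Real.exp (-(E (x + h * X) - E x) / T) - 1) := by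
        funext X; rw [min1_eq]; ring
      rw [hfun, integral_add (int_abs.mono' continuous_id'.aestronglyMeasurable
        (ae_of_all _ fun y => by rw [Real.norm_eq_abs])) intg2, SADrift.moment_one, zero_add]
    -- value of the limit integral
    have hL : ∫ X, X * min 0 (-a * X) ∂(gaussianReal 0 1) = L := by
      rw [integral_min0_linear a, hLdef, ha, neg_div, neg_div, div_div, mul_comm T 2]
    -- difference as a single integral
    have hdiff : (1 / h) * (∫ X, X * min 0 (Real.exp (-(E (x + h * X) - E x) / T) - 1)
          ∂(gaussianReal 0 1)) - L
        = ∫ X, (1 / h) * (X * min 0 (Real.exp (-(E (x + h * X) - E x) / T) - 1))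
            - X * min 0 (-a * X) ∂(gaussianReal 0 1) := by
      rw [integral_sub (intg2.const_mul _) intg3, integral_const_mul, hL]
    -- pointwise bound
    have hpt : ∀ X : ℝ,
        ‖(1 / h) * (X * min 0 (Real.exp (-(E (x + h * X) - E x) / T) - 1))
          - X * min 0 (-a * X)‖ ≤ h * Φ X := by
      intro X
      set u : ℝ := h * X with hu
      set zv : ℝ := -(E (x + u) - E x) / T with hzv
      have habsu : |u| = h * |X| := by rw [hu, abs_mul, abs_of_pos hh0]
      -- Taylor estimates
      have t1 : |zv + a * u| ≤ M * u ^ 2 / T := by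
        have e1 : zv + a * u = -((E (x + u) - E x - u * deriv E x) / T) := by
          rw [hzv, ha]; field_simp; ring
        rw [e1, abs_neg, abs_div, abs_of_pos hT]
        gcongr
        exact taylor_bound hE hM x u
      have t2 : |zv| ≤ (A * |u| + M * u ^ 2) / T := by
        rw [hzv, abs_div, abs_of_pos hT, abs_neg]
        have e2 : |E (x + u) - E x| ≤ A * |u| + M * u ^ 2 := by
          have e3 := taylor_bound hE hM x u
          have e5 : |E (x + u) - E x| ≤ |E (x + u) - E x - u * deriv E x| + |u * deriv E x| := by
            have := abs_add_le (E (x + u) - E x - u * deriv E x) (u * deriv E x)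
            simpa using this
          have e6 : |u * deriv E x| = A * |u| := by
            rw [abs_mul, ← hA]; ring
          linarith
        gcongr
      have t3 : |min 0 (Real.exp zv - 1) - min 0 (-a * u)|
          ≤ zv ^ 2 / 2 + M * u ^ 2 / T := by
        have h4 := min0_exp zv
        have h5 := abs_min0_sub zv (-a * u)
        have h6 : |zv - -a * u| = |zv + a * u| := by
          rw [show zv - -a * u = zv + a * u by ring]
        calc |min 0 (Real.exp zv - 1) - min 0 (-a * u)|
            ≤ |min 0 (Real.exp zv - 1) - min 0 zv| + |min 0 zv - min 0 (-a * u)| :=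
              abs_sub_le _ _ _
          _ ≤ zv ^ 2 / 2 + |zv + a * u| := add_le_add h4 (h6 ▸ h5)
          _ ≤ zv ^ 2 / 2 + M * u ^ 2 / T := add_le_add_right t1 _
      have t4 : |zv| ≤ h * (A * |X| + M * X ^ 2) / T := by
        refine le_trans t2 ?_
        rw [habsu, show u ^ 2 = h ^ 2 * X ^ 2 by rw [hu]; ring]
        gcongr
        nlinarith [mul_nonneg (mul_nonneg (mul_nonneg hM0 (sq_nonneg X)) hh0.le)
          (sub_nonneg.mpr hh1)]
      have t5 : zv ^ 2 ≤ (h * (A * |X| + M * X ^ 2) / T) ^ 2 := by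
        rw [← sq_abs zv]
        exact pow_le_pow_left₀ (abs_nonneg zv) t4 2
      have e7 : -a * u = h * (-a * X) := by rw [hu]; ring
      have e8 : X * min 0 (-a * X) = (1 / h) * (X * min 0 (-a * u)) := by
        rw [e7, min0_mul hh0]
        field_simp
      rw [Real.norm_eq_abs]
      calc |(1 / h) * (X * min 0 (Real.exp zv - 1)) - X * min 0 (-a * X)|
          = (1 / h) * (|X| * |min 0 (Real.exp zv - 1) - min 0 (-a * u)|) := by
            rw [e8, show (1 / h) * (X * min 0 (Real.exp zv - 1))
                - (1 / h) * (X * min 0 (-a * u))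
                = (1 / h) * (X * (min 0 (Real.exp zv - 1) - min 0 (-a * u))) by ring,
              abs_mul, abs_mul, abs_of_pos (by positivity : (0:ℝ) < 1 / h)]
        _ ≤ (1 / h) * (|X| * (zv ^ 2 / 2 + M * u ^ 2 / T)) := by
            have := mul_le_mul_of_nonneg_left t3 (abs_nonneg X)
            exact mul_le_mul_of_nonneg_left this (by positivity)
        _ = (1 / h) * (|X| * (zv ^ 2 / 2 + M * (h ^ 2 * |X| ^ 2) / T)) := by
            rw [show u ^ 2 = h ^ 2 * X ^ 2 by rw [hu]; ring, sq_abs]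
        _ ≤ h * ((A ^ 2 / T ^ 2 + M / T) * |X| ^ 3 + M ^ 2 / T ^ 2 * |X| ^ 5) := by
            refine alg hT hh0 hh1 hA0 hM0 (abs_nonneg X) ?_
            calc zv ^ 2 ≤ (h * (A * |X| + M * X ^ 2) / T) ^ 2 := t5
              _ = (h * (A * |X| + M * |X| ^ 2) / T) ^ 2 := by rw [sq_abs]
        _ = h * Φ X := by rw [hΦdef]
    -- conclusion
    calc |(1 / h) * (∫ X, X * min 1 (Real.exp (-(E (x + h * X) - E x) / T))
            ∂(gaussianReal 0 1)) - L|
        = ‖∫ X, (1 / h) * (X * min 0 (Real.exp (-(E (x + h * X) - E x) / T) - 1))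
            - X * min 0 (-a * X) ∂(gaussianReal 0 1)‖ := by
          rw [Real.norm_eq_abs, hint1, hdiff]
      _ ≤ ∫ X, h * Φ X ∂(gaussianReal 0 1) :=
          norm_integral_le_of_norm_le (intΦ.const_mul h) (ae_of_all _ hpt)
      _ = C * h := by rw [integral_const_mul]; ring
  -- final squeeze
  rw [← tendsto_sub_nhds_zero_iff]
  have hlim : Tendsto (fun h : ℝ => C * h) (𝓝[>] 0) (𝓝 0) := by
    have h1 : Tendsto (fun h : ℝ => C * h) (𝓝 0) (𝓝 (C * 0)) :=
      (continuous_const.mul continuous_id).tendsto 0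
    rw [mul_zero] at h1
    exact h1.mono_left nhdsWithin_le_nhds
  refine squeeze_zero_norm' ?_ hlim
  filter_upwards [Ioc_mem_nhdsGT_of_mem
    (show (0:ℝ) ∈ Set.Ico (0:ℝ) 1 by norm_num)] with h hh
  rw [Real.norm_eq_abs]
  exact key h hh
end

section
/- Let α ∈ (0,1), κ := 1 − α, C₂ > 0, K ≥ 0, and let t₀ ≥ max{1, (2κ/C₂)^{1/κ}}. Suppose h : [t₀, ∞) → [0, ∞) is differentiable and satisfies h'(t) ≤ −C₂ t^α h(t) + K/t for all t ≥ t₀. Then for all t ≥ t₀, h(t) ≤ (2K/C₂) · t^{−κ} + h(t₀) · exp( −(C₂/κ) (t^κ − t₀^κ) ). -/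
open Real

set_option maxHeartbeats 1600000 in
/-- Grönwall-type comparison lemma at the core of the convergence theorem for the
kinetic Simulated Annealing model: if `h ≥ 0` is differentiable on `[t₀, ∞)` with
`h'(t) ≤ −C₂ t^α h(t) + K/t` and `t₀ ≥ max{1, (2κ/C₂)^{1/κ}}` for `κ = 1 − α`, then
`h(t) ≤ (2K/C₂) t^{−κ} + h(t₀) exp(−(C₂/κ)(t^κ − t₀^κ))`. -/
theorem sa_entropy_decay (α κ C₂ K t₀ : ℝ)
    (hα : α ∈ Set.Ioo (0 : ℝ) 1) (hκ : κ = 1 - α) (hC₂ : 0 < C₂) (hK : 0 ≤ K)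
    (ht₀ : max 1 ((2 * κ / C₂) ^ (1 / κ)) ≤ t₀)
    (h : ℝ → ℝ)
    (h_nonneg : ∀ t, t₀ ≤ t → 0 ≤ h t)
    (h_diff : ∀ t, t₀ ≤ t → DifferentiableAt ℝ h t)
    (h_ineq : ∀ t, t₀ ≤ t → deriv h t ≤ -C₂ * t ^ α * h t + K / t) :
    ∀ t, t₀ ≤ t →
      h t ≤ (2 * K / C₂) * t ^ (-κ) + h t₀ * Real.exp (-(C₂ / κ) * (t ^ κ - t₀ ^ κ)) := by
  obtain ⟨hα0, hα1⟩ := hα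
  have hκ0 : 0 < κ := by rw [hκ]; linarith
  have hκne : κ ≠ 0 := ne_of_gt hκ0
  have ht01 : (1 : ℝ) ≤ t₀ := le_trans (le_max_left _ _) ht₀
  have ht0pos : (0 : ℝ) < t₀ := by linarith
  have hC₂ne : C₂ ≠ 0 := ne_of_gt hC₂
  have hbase : (0 : ℝ) < 2 * κ / C₂ := by positivity
  -- key fact: for x ≥ t₀, 2κ/C₂ ≤ x^κ
  have hBfact : ∀ x : ℝ, t₀ ≤ x → 2 * κ / C₂ ≤ x ^ κ := by
    intro x hx
    have h1 : (2 * κ / C₂) ^ (1 / κ) ≤ x := le_trans (le_trans (le_max_right _ _) ht₀) hx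
    have h2 : ((2 * κ / C₂) ^ (1 / κ)) ^ κ ≤ x ^ κ :=
      Real.rpow_le_rpow (by positivity) h1 hκ0.le
    rwa [one_div, Real.rpow_inv_rpow hbase.le hκne] at h2
  -- the supersolution
  set g : ℝ → ℝ := fun s => -(C₂ / κ) * (s ^ κ - t₀ ^ κ) with hg
  set φ : ℝ → ℝ := fun s => (2 * K / C₂) * s ^ (-κ) + h t₀ * Real.exp (g s) with hφ
  set φ' : ℝ → ℝ := fun s =>
    (2 * K / C₂) * (-κ * s ^ (-κ - 1)) +
      h t₀ * (Real.exp (g s) * (-(C₂ / κ) * (κ * s ^ (κ - 1)))) with hφ'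
  have hφderiv : ∀ x : ℝ, t₀ ≤ x → HasDerivAt φ (φ' x) x := by
    intro x hx
    have hxpos : (0 : ℝ) < x := lt_of_lt_of_le ht0pos hx
    have hxne : x ≠ 0 := ne_of_gt hxpos
    have h1 : HasDerivAt (fun s : ℝ => s ^ (-κ)) (-κ * x ^ (-κ - 1)) x :=
      Real.hasDerivAt_rpow_const (Or.inl hxne)
    have h2 : HasDerivAt (fun s : ℝ => s ^ κ - t₀ ^ κ) (κ * x ^ (κ - 1)) x :=
      (Real.hasDerivAt_rpow_const (Or.inl hxne)).sub_const _
    have h3 : HasDerivAt g (-(C₂ / κ) * (κ * x ^ (κ - 1))) x := h2.const_mul _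
    have h4 : HasDerivAt (fun s => Real.exp (g s))
        (Real.exp (g x) * (-(C₂ / κ) * (κ * x ^ (κ - 1)))) x := h3.exp
    exact (h1.const_mul _).add (h4.const_mul _)
  -- φ is a supersolution: φ' x ≥ -C₂ x^α φ x + K/x
  have hφsuper : ∀ x : ℝ, t₀ ≤ x → -C₂ * x ^ α * φ x + K / x ≤ φ' x := by
    intro x hx
    have hxpos : (0 : ℝ) < x := lt_of_lt_of_le ht0pos hx
    have hx1 : (1 : ℝ) ≤ x := le_trans ht01 hx
    set A : ℝ := x ^ α with hA
    set B : ℝ := x ^ κ with hB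
    have hApos : 0 < A := Real.rpow_pos_of_pos hxpos _
    have hBpos : 0 < B := Real.rpow_pos_of_pos hxpos _
    have hA1 : 1 ≤ A := by
      calc (1 : ℝ) = 1 ^ α := (Real.one_rpow _).symm
      _ ≤ x ^ α := Real.rpow_le_rpow zero_le_one hx1 hα0.le
    have hAB : A * B = x := by
      rw [hA, hB, ← Real.rpow_add hxpos]
      rw [hκ]
      norm_num
    have hB2 : 2 * κ / C₂ ≤ B := hBfact x hx
    have hAxB : B ≤ A * x := by nlinarith
    -- rewrite the rpow terms
    have e1 : x ^ (-κ) = B⁻¹ := by rw [Real.rpow_neg hxpos.le, hB]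
    have e2 : x ^ (-κ - 1) = B⁻¹ * x⁻¹ := by
      rw [show -κ - 1 = -κ + (-1) by ring, Real.rpow_add hxpos, Real.rpow_neg hxpos.le,
        Real.rpow_neg_one, hB]
    have e3 : x ^ (κ - 1) = B * x⁻¹ := by
      rw [show κ - 1 = κ + (-1) by ring, Real.rpow_add hxpos, Real.rpow_neg_one, hB]
    have hEpos : 0 ≤ h t₀ * Real.exp (g x) :=
      mul_nonneg (h_nonneg t₀ le_rfl) (Real.exp_pos _).le
    -- part (i): the power-law part
    have keyi : -C₂ * A * ((2 * K / C₂) * B⁻¹) + K / x ≤ (2 * K / C₂) * (-κ * (B⁻¹ * x⁻¹)) := by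
      have hCB : 2 * κ ≤ B * C₂ := (div_le_iff₀ hC₂).mp hB2
      have key : -(2 * K * κ) - (-2 * K * (A * x) + K * B) * C₂ ≥ 0 := by
        nlinarith [mul_nonneg (mul_nonneg hK hC₂.le) (sub_nonneg.mpr hAxB),
          mul_nonneg hK (sub_nonneg.mpr hCB)]
      rw [← sub_nonneg]
      have e : (2 * K / C₂) * (-κ * (B⁻¹ * x⁻¹)) - (-C₂ * A * ((2 * K / C₂) * B⁻¹) + K / x)
          = (-(2 * K * κ) - (-2 * K * (A * x) + K * B) * C₂) / (B * x * C₂) := by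
        field_simp
      rw [e]
      exact div_nonneg (by linarith) (by positivity)
    -- part (ii): the exponential part
    have hBxA : B * x⁻¹ ≤ A := by
      rw [← div_eq_mul_inv, div_le_iff₀ hxpos]
      nlinarith
    have keyii : -C₂ * A * (h t₀ * Real.exp (g x)) ≤
        h t₀ * (Real.exp (g x) * (-(C₂ / κ) * (κ * (B * x⁻¹)))) := by
      have e : h t₀ * (Real.exp (g x) * (-(C₂ / κ) * (κ * (B * x⁻¹))))
          = -C₂ * (B * x⁻¹) * (h t₀ * Real.exp (g x)) := by
        field_simp
      rw [e]
      nlinarith [mul_le_mul_of_nonneg_right hBxA (mul_nonneg hC₂.le hEpos)]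
    have hφx : φ x = (2 * K / C₂) * B⁻¹ + h t₀ * Real.exp (g x) := by
      rw [hφ]; simp only [e1]
    have hφ'x : φ' x = (2 * K / C₂) * (-κ * (B⁻¹ * x⁻¹)) +
        h t₀ * (Real.exp (g x) * (-(C₂ / κ) * (κ * (B * x⁻¹)))) := by
      rw [hφ']; simp only [e2, e3]
    rw [hφx, hφ'x]
    linarith [keyi, keyii]
  -- the integrating factor
  set E : ℝ → ℝ := fun s => C₂ / (α + 1) * s ^ (α + 1) with hE
  have hα1ne : α + 1 ≠ 0 := by positivity
  have hEderiv : ∀ x : ℝ, t₀ ≤ x → HasDerivAt E (C₂ * x ^ α) x := by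
    intro x hx
    have hxne : x ≠ 0 := ne_of_gt (lt_of_lt_of_le ht0pos hx)
    have h1 : HasDerivAt (fun s : ℝ => s ^ (α + 1)) ((α + 1) * x ^ (α + 1 - 1)) x :=
      Real.hasDerivAt_rpow_const (Or.inl hxne)
    have h2 := h1.const_mul (C₂ / (α + 1))
    have e : C₂ / (α + 1) * ((α + 1) * x ^ (α + 1 - 1)) = C₂ * x ^ α := by
      rw [show α + 1 - 1 = α by ring]
      field_simp
    rwa [e] at h2
  have hφeq : ∀ s : ℝ, φ s =
      2 * K / C₂ * s ^ (-κ) + h t₀ * Real.exp (-(C₂ / κ) * (s ^ κ - t₀ ^ κ)) :=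
    fun s => rfl
  clear_value g φ φ' E
  -- u = (h - φ) * exp(E)
  set u : ℝ → ℝ := fun s => (h s - φ s) * Real.exp (E s) with hu
  have huderiv : ∀ x : ℝ, t₀ ≤ x → HasDerivAt u
      ((deriv h x - φ' x) * Real.exp (E x) +
        (h x - φ x) * (Real.exp (E x) * (C₂ * x ^ α))) x := by
    intro x hx
    exact ((h_diff x hx).hasDerivAt.sub (hφderiv x hx)).mul ((hEderiv x hx).exp)
  have hudiff : ∀ x : ℝ, t₀ ≤ x → DifferentiableAt ℝ u x :=
    fun x hx => (huderiv x hx).differentiableAt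
  have hune : AntitoneOn u (Set.Ici t₀) := by
    apply antitoneOn_of_deriv_nonpos (convex_Ici t₀)
    · exact fun x hx => ((hudiff x hx).continuousAt).continuousWithinAt
    · intro x hx
      rw [interior_Ici] at hx
      exact (hudiff x (le_of_lt hx)).differentiableWithinAt
    · intro x hx
      rw [interior_Ici] at hx
      have hx' : t₀ ≤ x := le_of_lt hx
      rw [(huderiv x hx').deriv]
      have hb : (deriv h x - φ' x) + C₂ * x ^ α * (h x - φ x) ≤ 0 := by
        have i1 := h_ineq x hx'
        have i2 := hφsuper x hx'
        nlinarith [i1, i2]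
      nlinarith [mul_nonpos_of_nonpos_of_nonneg hb (Real.exp_pos (E x)).le]
  intro t ht
  have hut : u t ≤ u t₀ := hune (Set.self_mem_Ici) ht ht
  have hu0 : u t₀ ≤ 0 := by
    have h1 : φ t₀ = 2 * K / C₂ * t₀ ^ (-κ) + h t₀ := by
      rw [hφeq]; simp
    have h2 : 0 ≤ 2 * K / C₂ * t₀ ^ (-κ) := by positivity
    have h3 : h t₀ - φ t₀ ≤ 0 := by rw [h1]; linarith
    exact mul_nonpos_of_nonpos_of_nonneg h3 (Real.exp_pos _).le
  have : (h t - φ t) * Real.exp (E t) ≤ 0 := le_trans hut hu0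
  have hfin : h t - φ t ≤ 0 := by
    have h4 : (h t - φ t) * Real.exp (E t) ≤ 0 * Real.exp (E t) := by
      rw [zero_mul]; exact this
    exact le_of_mul_le_mul_right h4 (Real.exp_pos _)
  have hfin2 : h t ≤ φ t := by linarith
  rw [hφeq] at hfin2
  exact hfin2
end

section
/- Let F ∈ ℝ^{K×d}, let Γ ∈ ℝ^{K×K} be symmetric positive definite, let x⋆ ∈ ℝ^d and y := F x⋆. Let x¹, …, x^N : [0, ∞) → ℝ^d be continuously differentiable and satisfy the Ensemble Kalman Filter dynamics d/dt x^j_t = C(𝐱_t) Γ^{−1} ( y − F x^j_t ) for all j, where x̄_t := (1/N) Σ_i x^i_t and C(𝐱_t) := (1/N) Σ_{i=1}^N (x^i_t − x̄_t) ⊗ (F x^i_t − F x̄_t). Define the ensemble spreads e^j_t := x^j_t − x̄_t and the matrix E_t ∈ ℝ^{N×N} with entries (E_t)_{k,ℓ} := (e^ℓ_t)ᵀ Fᵀ Γ F e^k_t. Then ‖E_t‖ → 0 as t → ∞ at the algebraic rate O(N t^{−1}); i.e. there exist C₀ > 0 and t₁ ≥ 1, possibly depending on Γ, F and the initial ensemble,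 such that ‖E_t‖ ≤ C₀ N / t for all t ≥ t₁. -/
open Matrix Filter Topology

attribute [local instance] Matrix.normedAddCommGroup

namespace EnKFAux

variable {n m : ℕ}

lemma hasDerivAt_mulVec' (M : Matrix (Fin m) (Fin n) ℝ) {f : ℝ → Fin n → ℝ} {f' : Fin n → ℝ}
    {t : ℝ} (hf : HasDerivAt f f' t) :
    HasDerivAt (fun s => M.mulVec (f s)) (M.mulVec f') t := by
  rw [hasDerivAt_pi]
  intro p
  have h : HasDerivAt (fun s => ∑ r, M p r * f s r) (∑ r, M p r * f' r) t :=
    HasDerivAt.fun_sum fun r _ => ((hasDerivAt_pi.mp hf r).const_mul (M p r))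
  simpa [Matrix.mulVec, dotProduct] using h

lemma hasDerivAt_dotProduct' {f g : ℝ → Fin n → ℝ} {f' g' : Fin n → ℝ} {t : ℝ}
    (hf : HasDerivAt f f' t) (hg : HasDerivAt g g' t) :
    HasDerivAt (fun s => f s ⬝ᵥ g s) (f' ⬝ᵥ g t + f t ⬝ᵥ g') t := by
  have h : HasDerivAt (fun s => ∑ i, f s i * g s i) (∑ i, (f' i * g t i + f t i * g' i)) t :=
    HasDerivAt.fun_sum fun i _ => (hasDerivAt_pi.mp hf i).mul (hasDerivAt_pi.mp hg i)
  simpa [dotProduct, Finset.sum_add_distrib] using h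

lemma dot_symm {A : Matrix (Fin n) (Fin n) ℝ} (hA : A.IsHermitian) (v w : Fin n → ℝ) :
    w ⬝ᵥ A.mulVec v = v ⬝ᵥ A.mulVec w := by
  have hsym : ∀ i j, A i j = A j i := fun i j => by
    simpa using hA.apply j i
  simp only [dotProduct, Matrix.mulVec, Finset.mul_sum]
  rw [Finset.sum_comm]
  exact Finset.sum_congr rfl fun i _ => Finset.sum_congr rfl fun j _ => by rw [hsym j i]; ring

lemma star_eq_self (u : Fin n → ℝ) : star u = u := by
  funext i; simp

lemma psd_dot_nonneg {A : Matrix (Fin n) (Fin n) ℝ} (hA : A.PosSemidef) (v : Fin n → ℝ) :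
    0 ≤ v ⬝ᵥ A.mulVec v := by
  simpa [star_eq_self] using hA.dotProduct_mulVec_nonneg v

lemma psd_cs {A : Matrix (Fin n) (Fin n) ℝ} (hA : A.PosSemidef) (v w : Fin n → ℝ) :
    (v ⬝ᵥ A.mulVec w) ^ 2 ≤ (v ⬝ᵥ A.mulVec v) * (w ⬝ᵥ A.mulVec w) := by
  have key : ∀ x : ℝ, 0 ≤ (w ⬝ᵥ A.mulVec w) * (x * x) + (2 * (v ⬝ᵥ A.mulVec w)) * x
      + (v ⬝ᵥ A.mulVec v) := by
    intro s
    have h0 : 0 ≤ (v + s • w) ⬝ᵥ A.mulVec (v + s • w) := psd_dot_nonneg hA _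
    have hexp : (v + s • w) ⬝ᵥ A.mulVec (v + s • w)
        = (w ⬝ᵥ A.mulVec w) * (s * s) + (2 * (v ⬝ᵥ A.mulVec w)) * s + (v ⬝ᵥ A.mulVec v) := by
      rw [Matrix.mulVec_add, Matrix.mulVec_smul]
      simp only [dotProduct_add, add_dotProduct, smul_dotProduct,
        dotProduct_smul, smul_eq_mul]
      rw [dot_symm hA.1 v w]
      ring
    linarith [hexp ▸ h0]
  have hd := discrim_le_zero key
  rw [discrim] at hd
  nlinarith [hd]

lemma mulVec_sum' {ι : Type*} (s : Finset ι) (M : Matrix (Fin m) (Fin n) ℝ)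
    (f : ι → Fin n → ℝ) : M.mulVec (∑ i ∈ s, f i) = ∑ i ∈ s, M.mulVec (f i) := by
  funext p
  simp only [Matrix.mulVec, dotProduct, Finset.sum_apply, Finset.mul_sum]
  rw [Finset.sum_comm]

lemma sum_mulVec' {ι : Type*} (s : Finset ι) (M : ι → Matrix (Fin m) (Fin n) ℝ)
    (u : Fin n → ℝ) : (∑ i ∈ s, M i).mulVec u = ∑ i ∈ s, (M i).mulVec u := by
  funext p
  simp only [Matrix.mulVec, dotProduct, Matrix.sum_apply, Finset.sum_mul,
    Finset.sum_apply]
  rw [Finset.sum_comm]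

lemma vecMulVec_mulVec' (w : Fin m → ℝ) (b u : Fin n → ℝ) :
    (vecMulVec w b).mulVec u = (b ⬝ᵥ u) • w := by
  funext p
  simp only [Matrix.mulVec, Matrix.vecMulVec_apply, dotProduct, Pi.smul_apply,
    smul_eq_mul, Finset.sum_mul]
  exact Finset.sum_congr rfl fun q _ => by ring

lemma sum_dotProduct' {ι : Type*} (s : Finset ι) (f : ι → Fin n → ℝ) (u : Fin n → ℝ) :
    (∑ i ∈ s, f i) ⬝ᵥ u = ∑ i ∈ s, f i ⬝ᵥ u := by
  simp only [dotProduct, Finset.sum_apply, Finset.sum_mul]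
  rw [Finset.sum_comm]

lemma dotProduct_sum' {ι : Type*} (s : Finset ι) (u : Fin n → ℝ) (f : ι → Fin n → ℝ) :
    u ⬝ᵥ (∑ i ∈ s, f i) = ∑ i ∈ s, u ⬝ᵥ f i := by
  simp only [dotProduct, Finset.sum_apply, Finset.mul_sum]
  rw [Finset.sum_comm]

lemma dot_self_nonneg (u : Fin n → ℝ) : 0 ≤ u ⬝ᵥ u :=
  Finset.sum_nonneg fun i _ => mul_self_nonneg _

lemma abs_apply_le_sqrt_dot (u : Fin n → ℝ) (p : Fin n) :
    |u p| ≤ Real.sqrt (u ⬝ᵥ u) := by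
  rw [← Real.sqrt_sq_eq_abs]
  apply Real.sqrt_le_sqrt
  have h := Finset.single_le_sum (f := fun q => u q * u q)
    (fun q _ => mul_self_nonneg _) (Finset.mem_univ p)
  simpa [dotProduct, sq] using h

lemma dot_mulVec_abs_le (M : Matrix (Fin m) (Fin n) ℝ) (u : Fin m → ℝ) (w : Fin n → ℝ) :
    |u ⬝ᵥ M.mulVec w| ≤ (∑ p, ∑ q, |M p q|) * Real.sqrt (u ⬝ᵥ u) * Real.sqrt (w ⬝ᵥ w) := by
  have hu := abs_apply_le_sqrt_dot u
  have hw := abs_apply_le_sqrt_dot w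
  calc |u ⬝ᵥ M.mulVec w| = |∑ p, ∑ q, u p * (M p q * w q)| := by
        simp [dotProduct, Matrix.mulVec, Finset.mul_sum]
    _ ≤ ∑ p, |∑ q, u p * (M p q * w q)| := Finset.abs_sum_le_sum_abs _ _
    _ ≤ ∑ p, ∑ q, |u p * (M p q * w q)| :=
        Finset.sum_le_sum fun p _ => Finset.abs_sum_le_sum_abs _ _
    _ ≤ ∑ p, ∑ q, Real.sqrt (u ⬝ᵥ u) * |M p q| * Real.sqrt (w ⬝ᵥ w) := by
        refine Finset.sum_le_sum fun p _ => Finset.sum_le_sum fun q _ => ?_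
        have h1 : |u p * (M p q * w q)| = |u p| * |M p q| * |w q| := by
          rw [abs_mul, abs_mul]; ring
        rw [h1]
        exact mul_le_mul (mul_le_mul (hu p) le_rfl (abs_nonneg _) (Real.sqrt_nonneg _))
          (hw q) (abs_nonneg _) (by positivity)
    _ = (∑ p, ∑ q, |M p q|) * Real.sqrt (u ⬝ᵥ u) * Real.sqrt (w ⬝ᵥ w) := by
        simp only [Finset.sum_mul, Finset.mul_sum]
        exact Finset.sum_congr rfl fun p _ => Finset.sum_congr rfl fun q _ => by ring

end EnKFAux

open EnKFAux

/-- Ensemble collapse for the continuous-time Ensemble Kalman Filter applied to the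
noise-free linear inverse problem `y = F x⋆`: the Gram-type matrix `E_t` of the mapped
ensemble spreads, `(E_t)_{k,ℓ} = (e^ℓ_t)ᵀ Fᵀ Γ F e^k_t`, decays in norm at the algebraic
rate `O(N/t)`. -/
theorem enkf_ensemble_collapse {d K N : ℕ} (hN : 0 < N)
    (F : Matrix (Fin K) (Fin d) ℝ) (Γ : Matrix (Fin K) (Fin K) ℝ) (hΓ : Γ.PosDef)
    (xstar : Fin d → ℝ) (y : Fin K → ℝ) (hy : y = F.mulVec xstar)
    (x : Fin N → ℝ → (Fin d → ℝ))
    (hx_smooth : ∀ j : Fin N, ContDiff ℝ 1 (x j))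
    (xbar : ℝ → (Fin d → ℝ)) (hxbar : ∀ t, xbar t = (N : ℝ)⁻¹ • ∑ i : Fin N, x i t)
    (C : ℝ → Matrix (Fin d) (Fin K) ℝ)
    (hC : ∀ t, C t = (N : ℝ)⁻¹ •
      ∑ i : Fin N, vecMulVec (x i t - xbar t) (F.mulVec (x i t) - F.mulVec (xbar t)))
    (hx_ode : ∀ (j : Fin N) (t : ℝ), 0 ≤ t →
      HasDerivAt (x j) ((C t).mulVec (Γ⁻¹.mulVec (y - F.mulVec (x j t)))) t)
    (e : Fin N → ℝ → (Fin d → ℝ)) (he : ∀ j t, e j t = x j t - xbar t)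
    (Emat : ℝ → Matrix (Fin N) (Fin N) ℝ)
    (hEmat : ∀ t k ℓ, Emat t k ℓ =
      (F.mulVec (e ℓ t)) ⬝ᵥ (Γ.mulVec (F.mulVec (e k t)))) :
    ∃ C₀ : ℝ, 0 < C₀ ∧ ∃ t₁ : ℝ, 1 ≤ t₁ ∧ ∀ t, t₁ ≤ t → ‖Emat t‖ ≤ C₀ * N / t := by
  classical
  have hN' : (0:ℝ) < N := by exact_mod_cast hN
  have hA : (Γ⁻¹).PosDef := hΓ.inv
  have hAH : (Γ⁻¹).IsHermitian := hA.1
  set a : ℝ → Fin N → Fin N → ℝ :=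
    fun s i k => (F.mulVec (e i s)) ⬝ᵥ (Γ⁻¹).mulVec (F.mulVec (e k s)) with hadef
  set ψ : ℝ → ℝ := fun s => ∑ k, a s k k with hψdef
  have haa : ∀ (s : ℝ) (k : Fin N), 0 ≤ a s k k := fun s k =>
    psd_dot_nonneg hA.posSemidef _
  have hψ0 : ∀ s, 0 ≤ ψ s := fun s => Finset.sum_nonneg fun k _ => haa s k
  have ha_le_ψ : ∀ (s : ℝ) (k : Fin N), a s k k ≤ ψ s := fun s k =>
    Finset.single_le_sum (f := fun k => a s k k) (fun k _ => haa s k) (Finset.mem_univ k)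
  have hasymm : ∀ (s : ℝ) (i k : Fin N), a s i k = a s k i := fun s i k =>
    dot_symm hAH _ _
  -- the averaged right-hand side
  have hval : ∀ t : ℝ, (N:ℝ)⁻¹ • ∑ i : Fin N, (C t).mulVec (Γ⁻¹.mulVec (y - F.mulVec (x i t)))
      = (C t).mulVec (Γ⁻¹.mulVec (y - F.mulVec (xbar t))) := by
    intro t
    have hvec : (N:ℝ)⁻¹ • (∑ i : Fin N, (y - F.mulVec (x i t))) = y - F.mulVec (xbar t) := by
      rw [hxbar t, Finset.sum_sub_distrib, Finset.sum_const, Finset.card_univ,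
        Fintype.card_fin, smul_sub]
      congr 1
      · rw [← Nat.cast_smul_eq_nsmul ℝ, smul_smul, inv_mul_cancel₀ hN'.ne', one_smul]
      · rw [Matrix.mulVec_smul, mulVec_sum' Finset.univ F]
    calc (N:ℝ)⁻¹ • ∑ i : Fin N, (C t).mulVec (Γ⁻¹.mulVec (y - F.mulVec (x i t)))
        = (C t).mulVec (Γ⁻¹.mulVec ((N:ℝ)⁻¹ • ∑ i : Fin N, (y - F.mulVec (x i t)))) := by
          rw [Matrix.mulVec_smul, Matrix.mulVec_smul, mulVec_sum' Finset.univ Γ⁻¹,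
            mulVec_sum' Finset.univ (C t)]
      _ = (C t).mulVec (Γ⁻¹.mulVec (y - F.mulVec (xbar t))) := by rw [hvec]
  have hxbarD : ∀ t : ℝ, 0 ≤ t →
      HasDerivAt xbar ((C t).mulVec (Γ⁻¹.mulVec (y - F.mulVec (xbar t)))) t := by
    intro t ht
    rw [← hval t]
    have hfun : xbar = fun s => (N:ℝ)⁻¹ • ∑ i : Fin N, x i s := funext hxbar
    rw [hfun]
    exact (HasDerivAt.fun_sum fun i _ => hx_ode i t ht).const_smul ((N:ℝ)⁻¹)
  have heD : ∀ (j : Fin N) (t : ℝ), 0 ≤ t →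
      HasDerivAt (e j) (-((C t).mulVec (Γ⁻¹.mulVec (F.mulVec (e j t))))) t := by
    intro j t ht
    have hval2 : (C t).mulVec (Γ⁻¹.mulVec (y - F.mulVec (x j t)))
        - (C t).mulVec (Γ⁻¹.mulVec (y - F.mulVec (xbar t)))
        = -((C t).mulVec (Γ⁻¹.mulVec (F.mulVec (e j t)))) := by
      have hvec2 : (y - F.mulVec (x j t)) - (y - F.mulVec (xbar t)) = -(F.mulVec (e j t)) := by
        rw [he j t, Matrix.mulVec_sub]
        abel
      rw [← Matrix.mulVec_sub (C t), ← Matrix.mulVec_sub Γ⁻¹, hvec2, Matrix.mulVec_neg,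
        Matrix.mulVec_neg]
    have hfun : e j = fun s => x j s - xbar s := funext (he j)
    rw [← hval2, hfun]
    exact (hx_ode j t ht).sub (hxbarD t ht)
  have hCmul : ∀ (t : ℝ) (u : Fin K → ℝ),
      (C t).mulVec u = (N:ℝ)⁻¹ • ∑ i : Fin N, ((F.mulVec (e i t)) ⬝ᵥ u) • e i t := by
    intro t u
    rw [hC t, Matrix.smul_mulVec, sum_mulVec' Finset.univ]
    congr 1
    refine Finset.sum_congr rfl fun i _ => ?_
    rw [vecMulVec_mulVec', he i t, Matrix.mulVec_sub]
  have hFeD : ∀ (k : Fin N) (t : ℝ), 0 ≤ t →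
      HasDerivAt (fun s => F.mulVec (e k s))
        (-((N:ℝ)⁻¹ • ∑ i : Fin N, a t i k • F.mulVec (e i t))) t := by
    intro k t ht
    have h1 := hasDerivAt_mulVec' F (heD k t ht)
    convert h1 using 1
    rw [Matrix.mulVec_neg]
    congr 1
    rw [hCmul t, Matrix.mulVec_smul, mulVec_sum' Finset.univ F]
    congr 1
    refine Finset.sum_congr rfl fun i _ => ?_
    rw [Matrix.mulVec_smul]
  have haD : ∀ (k : Fin N) (t : ℝ), 0 ≤ t →
      HasDerivAt (fun s => a s k k) (-(2 * (N:ℝ)⁻¹) * ∑ i : Fin N, (a t i k) ^ 2) t := by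
    intro k t ht
    have h1 := hasDerivAt_dotProduct' (hFeD k t ht) (hasDerivAt_mulVec' Γ⁻¹ (hFeD k t ht))
    have hfun : (fun s => a s k k)
        = fun s => (F.mulVec (e k s)) ⬝ᵥ (Γ⁻¹).mulVec (F.mulVec (e k s)) := by
      funext s; simp only [hadef]
    rw [hfun]
    convert h1 using 1
    beta_reduce
    have e1 : (-((N:ℝ)⁻¹ • ∑ i : Fin N, a t i k • F.mulVec (e i t)))
          ⬝ᵥ (Γ⁻¹).mulVec (F.mulVec (e k t))
        = -((N:ℝ)⁻¹ * ∑ i : Fin N, a t i k * a t i k) := by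
      rw [neg_dotProduct, smul_dotProduct, sum_dotProduct' Finset.univ,
        smul_eq_mul]
      congr 2
      refine Finset.sum_congr rfl fun i _ => ?_
      rw [smul_dotProduct, smul_eq_mul]
    have e2 : (F.mulVec (e k t))
          ⬝ᵥ (Γ⁻¹).mulVec (-((N:ℝ)⁻¹ • ∑ i : Fin N, a t i k • F.mulVec (e i t)))
        = -((N:ℝ)⁻¹ * ∑ i : Fin N, a t i k * a t i k) := by
      rw [Matrix.mulVec_neg, dotProduct_neg, Matrix.mulVec_smul, dotProduct_smul,
        mulVec_sum' Finset.univ, dotProduct_sum' Finset.univ, smul_eq_mul]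
      congr 2
      refine Finset.sum_congr rfl fun i _ => ?_
      rw [Matrix.mulVec_smul, dotProduct_smul, smul_eq_mul]
      congr 1
      rw [hasymm t i k]
    rw [e1, e2]
    simp only [pow_two]
    ring
  have hψD : ∀ t : ℝ, 0 ≤ t →
      HasDerivAt ψ (-(2 * (N:ℝ)⁻¹) * ∑ k : Fin N, ∑ i : Fin N, (a t i k) ^ 2) t := by
    intro t ht
    have h1 : HasDerivAt (fun s => ∑ k : Fin N, a s k k)
        (∑ k : Fin N, -(2 * (N:ℝ)⁻¹) * ∑ i : Fin N, (a t i k) ^ 2) t :=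
      HasDerivAt.fun_sum fun k _ => haD k t ht
    rw [hψdef]
    convert h1 using 1
    rw [Finset.mul_sum]
  have hψcont : ∀ s : ℝ, 0 ≤ s → ContinuousAt ψ s := fun s hs => (hψD s hs).continuousAt
  have hψanti : AntitoneOn ψ (Set.Ici (0:ℝ)) := by
    apply antitoneOn_of_deriv_nonpos (convex_Ici 0)
    · exact fun s hs => (hψcont s hs).continuousWithinAt
    · intro s hs
      rw [interior_Ici] at hs
      exact ((hψD s (le_of_lt hs)).differentiableAt).differentiableWithinAt
    · intro s hs
      rw [interior_Ici] at hs
      rw [(hψD s (le_of_lt hs)).deriv]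
      have h2 : (0:ℝ) ≤ ∑ k : Fin N, ∑ i : Fin N, (a s i k) ^ 2 :=
        Finset.sum_nonneg fun k _ => Finset.sum_nonneg fun i _ => sq_nonneg _
      have h3 : (0:ℝ) ≤ 2 * (N:ℝ)⁻¹ := by positivity
      nlinarith
  have hkey : ∀ s : ℝ, (ψ s) ^ 2 ≤ (N:ℝ) * ∑ k : Fin N, ∑ i : Fin N, (a s i k) ^ 2 := by
    intro s
    have h1 : ∑ k : Fin N, (a s k k) ^ 2 ≤ ∑ k : Fin N, ∑ i : Fin N, (a s i k) ^ 2 :=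
      Finset.sum_le_sum fun k _ =>
        Finset.single_le_sum (f := fun i => (a s i k) ^ 2) (fun i _ => sq_nonneg _)
          (Finset.mem_univ k)
    have h2 : (ψ s) ^ 2 ≤ (N:ℝ) * ∑ k : Fin N, (a s k k) ^ 2 := by
      have h3 := sq_sum_le_card_mul_sum_sq (s := (Finset.univ : Finset (Fin N)))
        (f := fun k => a s k k)
      simpa [hψdef] using h3
    calc (ψ s) ^ 2 ≤ (N:ℝ) * ∑ k : Fin N, (a s k k) ^ 2 := h2
      _ ≤ (N:ℝ) * ∑ k : Fin N, ∑ i : Fin N, (a s i k) ^ 2 :=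
        mul_le_mul_of_nonneg_left h1 hN'.le
  -- entrywise comparison constant
  set CΓ : ℝ := (∑ p : Fin K, ∑ q : Fin K, |Γ p q|) + 1 with hCΓdef
  have hΓsum0 : (0:ℝ) ≤ ∑ p : Fin K, ∑ q : Fin K, |Γ p q| :=
    Finset.sum_nonneg fun p _ => Finset.sum_nonneg fun q _ => abs_nonneg _
  have hCΓpos : 0 < CΓ := by rw [hCΓdef]; linarith
  have hΓsum_le : (∑ p : Fin K, ∑ q : Fin K, |Γ p q|) ≤ CΓ := by rw [hCΓdef]; linarith
  have hcomp : ∀ u : Fin K → ℝ, u ⬝ᵥ u ≤ CΓ * (u ⬝ᵥ (Γ⁻¹).mulVec u) := by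
    intro u
    have hAinvΓ : (Γ⁻¹).mulVec (Γ.mulVec u) = u := by
      rw [Matrix.mulVec_mulVec, Matrix.nonsing_inv_mul Γ (isUnit_iff_ne_zero.mpr hΓ.det_pos.ne'),
        Matrix.one_mulVec]
    have hcs := psd_cs hA.posSemidef u (Γ.mulVec u)
    rw [hAinvΓ] at hcs
    rw [dotProduct_comm (Γ.mulVec u) u] at hcs
    have h3 : u ⬝ᵥ Γ.mulVec u ≤ CΓ * (u ⬝ᵥ u) := by
      have h4 := dot_mulVec_abs_le Γ u u
      have h5 : Real.sqrt (u ⬝ᵥ u) * Real.sqrt (u ⬝ᵥ u) = u ⬝ᵥ u :=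
        Real.mul_self_sqrt (dot_self_nonneg u)
      calc u ⬝ᵥ Γ.mulVec u ≤ |u ⬝ᵥ Γ.mulVec u| := le_abs_self _
        _ ≤ (∑ p : Fin K, ∑ q : Fin K, |Γ p q|) * Real.sqrt (u ⬝ᵥ u) * Real.sqrt (u ⬝ᵥ u) := h4
        _ = (∑ p : Fin K, ∑ q : Fin K, |Γ p q|) * (u ⬝ᵥ u) := by rw [mul_assoc, h5]
        _ ≤ CΓ * (u ⬝ᵥ u) := mul_le_mul_of_nonneg_right hΓsum_le (dot_self_nonneg u)
    rcases (dot_self_nonneg u).eq_or_lt with h0 | h0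
    · rw [← h0]
      exact mul_nonneg hCΓpos.le (psd_dot_nonneg hA.posSemidef u)
    · nlinarith [hcs, mul_le_mul_of_nonneg_left h3 (psd_dot_nonneg hA.posSemidef u), h0,
        psd_dot_nonneg hA.posSemidef u]
  have hEbound : ∀ s : ℝ, ‖Emat s‖ ≤ CΓ ^ 2 * ψ s := by
    intro s
    rw [Matrix.norm_le_iff (mul_nonneg (pow_nonneg hCΓpos.le 2) (hψ0 s))]
    · intro k ℓ
      rw [hEmat s k ℓ]
      have h4 := dot_mulVec_abs_le Γ (F.mulVec (e ℓ s)) (F.mulVec (e k s))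
      have hb : ∀ j : Fin N,
          Real.sqrt ((F.mulVec (e j s)) ⬝ᵥ (F.mulVec (e j s))) ≤ Real.sqrt (CΓ * ψ s) := by
        intro j
        apply Real.sqrt_le_sqrt
        calc (F.mulVec (e j s)) ⬝ᵥ (F.mulVec (e j s))
            ≤ CΓ * ((F.mulVec (e j s)) ⬝ᵥ (Γ⁻¹).mulVec (F.mulVec (e j s))) := hcomp _
          _ = CΓ * a s j j := by simp only [hadef]
          _ ≤ CΓ * ψ s := mul_le_mul_of_nonneg_left (ha_le_ψ s j) hCΓpos.le
      calc ‖(F.mulVec (e ℓ s)) ⬝ᵥ (Γ.mulVec (F.mulVec (e k s)))‖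
          = |(F.mulVec (e ℓ s)) ⬝ᵥ (Γ.mulVec (F.mulVec (e k s)))| := Real.norm_eq_abs _
        _ ≤ (∑ p : Fin K, ∑ q : Fin K, |Γ p q|)
            * Real.sqrt ((F.mulVec (e ℓ s)) ⬝ᵥ (F.mulVec (e ℓ s)))
            * Real.sqrt ((F.mulVec (e k s)) ⬝ᵥ (F.mulVec (e k s))) := h4
        _ ≤ CΓ * Real.sqrt (CΓ * ψ s) * Real.sqrt (CΓ * ψ s) := by
            refine mul_le_mul (mul_le_mul hΓsum_le (hb ℓ) (Real.sqrt_nonneg _) hCΓpos.le)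
              (hb k) (Real.sqrt_nonneg _) ?_
            exact mul_nonneg hCΓpos.le (Real.sqrt_nonneg _)
        _ = CΓ * (CΓ * ψ s) := by
            rw [mul_assoc, Real.mul_self_sqrt (mul_nonneg hCΓpos.le (hψ0 s))]
        _ = CΓ ^ 2 * ψ s := by ring
  refine ⟨CΓ ^ 2 * (N:ℝ), mul_pos (pow_pos hCΓpos 2) hN', 2, by norm_num, ?_⟩
  intro t ht
  have ht0 : (0:ℝ) < t := by linarith
  rcases (hψ0 t).eq_or_lt with h0 | h0
  · calc ‖Emat t‖ ≤ CΓ ^ 2 * ψ t := hEbound t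
      _ = 0 := by rw [← h0]; ring
      _ ≤ CΓ ^ 2 * (N:ℝ) * (N:ℝ) / t := div_nonneg (by positivity) ht0.le
  · have hlt : (1:ℝ) < t := by linarith
    have hψpos : ∀ s, s ∈ Set.Icc (1:ℝ) t → 0 < ψ s := by
      intro s hs
      have h1 : ψ t ≤ ψ s := hψanti (Set.mem_Ici.mpr (by linarith [hs.1]))
        (Set.mem_Ici.mpr (by linarith)) hs.2
      linarith
    have hcont : ContinuousOn (fun s => (ψ s)⁻¹) (Set.Icc 1 t) := by
      apply ContinuousOn.inv₀
      · exact fun s hs => ((hψcont s (by linarith [hs.1])).continuousWithinAt)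
      · exact fun s hs => (hψpos s hs).ne'
    have hderiv : ∀ s ∈ Set.Ioo (1:ℝ) t, HasDerivAt (fun s => (ψ s)⁻¹)
        (-(-(2 * (N:ℝ)⁻¹) * ∑ k : Fin N, ∑ i : Fin N, (a s i k) ^ 2) / (ψ s) ^ 2) s := by
      intro s hs
      exact (hψD s (by linarith [hs.1])).inv (hψpos s ⟨hs.1.le, hs.2.le⟩).ne'
    obtain ⟨c, hc, hceq⟩ := exists_hasDerivAt_eq_slope (fun s => (ψ s)⁻¹)
      (fun s => -(-(2 * (N:ℝ)⁻¹) * ∑ k : Fin N, ∑ i : Fin N, (a s i k) ^ 2) / (ψ s) ^ 2)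
      hlt hcont hderiv
    have hcpos : 0 < ψ c := hψpos c ⟨hc.1.le, hc.2.le⟩
    have hslope : 2 / (N:ℝ) ^ 2
        ≤ -(-(2 * (N:ℝ)⁻¹) * ∑ k : Fin N, ∑ i : Fin N, (a c i k) ^ 2) / (ψ c) ^ 2 := by
      rw [div_le_div_iff₀ (by positivity) (by positivity)]
      have hexpr : -(-(2 * (N:ℝ)⁻¹) * ∑ k : Fin N, ∑ i : Fin N, (a c i k) ^ 2) * (N:ℝ) ^ 2
          = 2 * (N:ℝ) * ∑ k : Fin N, ∑ i : Fin N, (a c i k) ^ 2 := by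
        field_simp
      rw [hexpr]
      nlinarith [hkey c]
    have h2 : 2 / (N:ℝ) ^ 2 ≤ ((ψ t)⁻¹ - (ψ 1)⁻¹) / (t - 1) := by
      rw [← hceq]
      exact hslope
    have h3 := (le_div_iff₀ (by linarith : (0:ℝ) < t - 1)).mp h2
    have h1pos : 0 < ψ 1 := hψpos 1 ⟨le_refl 1, hlt.le⟩
    have h4 : (0:ℝ) ≤ (ψ 1)⁻¹ := inv_nonneg.mpr h1pos.le
    have h5 : t / (N:ℝ) ^ 2 ≤ 2 / (N:ℝ) ^ 2 * (t - 1) := by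
      rw [div_mul_eq_mul_div]
      apply div_le_div_of_nonneg_right ?_ (by positivity)
      linarith
    have hqinv : t / (N:ℝ) ^ 2 ≤ (ψ t)⁻¹ := by linarith
    have hψle : ψ t ≤ (N:ℝ) ^ 2 / t := by
      have hpos2 : (0:ℝ) < t / (N:ℝ) ^ 2 := by positivity
      have h6 := inv_anti₀ hpos2 hqinv
      rwa [inv_inv, inv_div] at h6
    calc ‖Emat t‖ ≤ CΓ ^ 2 * ψ t := hEbound t
      _ ≤ CΓ ^ 2 * ((N:ℝ) ^ 2 / t) := mul_le_mul_of_nonneg_left hψle (by positivity)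
      _ = CΓ ^ 2 * (N:ℝ) * (N:ℝ) / t := by ring
end
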